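/- arXiv:1409.2175 — 7 statements merged into one kernel-verified Lean document; each statement's English description precedes it below -/
import Mathlib

section
/- Let X and Y be nonempty finite sets, and let a and b be two deterministic non-repeating search algorithms on (X, Y). Then for every m ≤ |X| and every vector y = (y₁, …, yₘ) ∈ Yᵐ, the number of functions f : X → Y whose value-trace under a equals y is the same as the number of functions f : X → Y whose value-trace under b equals y; that is, |{f ∈ Y^X : a_Y^m(f) = y}| = |{f ∈ Y^X : b_Y^m(f) = y}|. -/
/-!
Fix a target trace `y`. While `f` reproduces `y`, the algorithm only ever sees the values `y`, so
its queries `q₁, …, qₘ` depend on `y` alone and `a_Y^m(f) = y` just says `f qᵢ = yᵢ` for all `i`.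
If `a` is non-repeating the `qᵢ` are distinct (otherwise a function extending `y` along the first
repetition would make `a` repeat), and any two injections `Fin m → X` differ by a permutation `σ`
of `X`; precomposition with `σ` matches the functions counted for `a` with those counted for `b`.
-/

variable {X Y : Type*}

/-- The history (list of query/value pairs) produced by algorithm `a` on
objective function `f` after `n` evaluations. -/
def nflHistory (a : List (X × Y) → X) (f : X → Y) : ℕ → List (X × Y)
  | 0 => []
  | n + 1 =>
      nflHistory a f n ++ [(a (nflHistory a f n), f (a (nflHistory a f n)))]

/-- The `(n+1)`-st point queried by algorithm `a` on objective function `f`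
(indexed from `0`, so `nflQuery a f 0 = x₁ = a []`). -/
def nflQuery (a : List (X × Y) → X) (f : X → Y) (n : ℕ) : X :=
  a (nflHistory a f n)

/-- The value-trace of algorithm `a` on `f` after `m` steps:
`aᵧᵐ(f) = (y₁, …, yₘ) = (f x₁, …, f xₘ)`. -/
def nflTrace (a : List (X × Y) → X) (f : X → Y) (m : ℕ) : Fin m → Y :=
  fun i => f (nflQuery a f i)

/-- An algorithm is non-repeating if, for every objective function, the queried
points are pairwise distinct as long as at most `|X|` queries are made. -/
def NonRepeating [Fintype X] (a : List (X × Y) → X) : Prop :=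
  ∀ f : X → Y, ∀ i j : ℕ, i < Fintype.card X → j < Fintype.card X → i ≠ j →
    nflQuery a f i ≠ nflQuery a f j

open Finset

def nflHistoryOfValues (a : List (X × Y) → X) {m : ℕ} (y : Fin m → Y) : ℕ → List (X × Y)
  | 0 => []
  | n + 1 =>
      if h : n < m then
        nflHistoryOfValues a y n ++ [(a (nflHistoryOfValues a y n), y ⟨n, h⟩)]
      else nflHistoryOfValues a y n

def nflQueryOfValues (a : List (X × Y) → X) {m : ℕ} (y : Fin m → Y) (i : Fin m) : X :=
  a (nflHistoryOfValues a y i)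

theorem nflHistory_eq_nflHistoryOfValues_nflTrace (a : List (X × Y) → X) (f : X → Y) {m n : ℕ}
    (hn : n ≤ m) : nflHistory a f n = nflHistoryOfValues a (nflTrace a f m) n := by
  induction n with
  | zero => rfl
  | succ n ih =>
    rw [nflHistory, nflHistoryOfValues, dif_pos (Nat.lt_of_succ_le hn), ← ih (by omega)]
    rfl

theorem nflHistory_eq_nflHistoryOfValues {a : List (X × Y) → X} {f : X → Y} {m n : ℕ}
    {y : Fin m → Y} (hn : n ≤ m)
    (hf : ∀ i : Fin m, (i : ℕ) < n → f (nflQueryOfValues a y i) = y i) :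
    nflHistory a f n = nflHistoryOfValues a y n := by
  induction n with
  | zero => rfl
  | succ n ih =>
    have hfn := hf ⟨n, hn⟩ (Nat.lt_succ_self n)
    rw [nflQueryOfValues] at hfn
    rw [nflHistory, nflHistoryOfValues, dif_pos (Nat.lt_of_succ_le hn),
      ih (by omega) fun i hi => hf i (by omega), hfn]

theorem nflTrace_eq_iff {a : List (X × Y) → X} {f : X → Y} {m : ℕ} {y : Fin m → Y} :
    nflTrace a f m = y ↔ f ∘ nflQueryOfValues a y = y := by
  constructor
  · rintro rfl
    funext i
    simp only [Function.comp_apply, nflQueryOfValues,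
      ← nflHistory_eq_nflHistoryOfValues_nflTrace a f i.isLt.le]
    rfl
  · intro hf
    funext i
    rw [nflTrace, nflQuery, nflHistory_eq_nflHistoryOfValues i.isLt.le fun j _ => congrFun hf j]
    exact congrFun hf i

theorem Set.InjOn.exists_comp_eqOn {ι : Type*} [Nonempty ι] {q : ι → X} {s : Set ι}
    (hq : s.InjOn q) (y : ι → Y) : ∃ f : X → Y, s.EqOn (f ∘ q) y :=
  ⟨y ∘ Function.invFunOn q s, fun _ hi => congrArg y (hq.leftInvOn_invFunOn hi)⟩

theorem NonRepeating.injective_nflQueryOfValues [Fintype X] {a : List (X × Y) → X}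
    (ha : NonRepeating a) {m : ℕ} (hm : m ≤ Fintype.card X) (y : Fin m → Y) :
    Function.Injective (nflQueryOfValues a y) := by
  set q := nflQueryOfValues a y
  by_contra hq
  have hrep : ∃ k : Fin m, ∃ j < k, q j = q k := by
    obtain ⟨i, j, hij, hne⟩ := Function.not_injective_iff.mp hq
    rcases hne.lt_or_gt with h | h
    exacts [⟨j, i, h, hij⟩, ⟨i, j, h, hij.symm⟩]
  obtain ⟨k, hk_min⟩ := exists_minimal_of_wellFoundedLT _ hrep
  obtain ⟨j, hjk, hjq⟩ := hk_min.prop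
  have hinj : {i | i < k}.InjOn q := by
    intro i hi i' hi' hii'
    by_contra hne
    rcases Ne.lt_or_gt hne with h | h
    exacts [hk_min.not_prop_of_lt hi' ⟨i, h, hii'⟩, hk_min.not_prop_of_lt hi ⟨i', h, hii'.symm⟩]
  have : Nonempty (Fin m) := ⟨k⟩
  obtain ⟨f, hf⟩ := hinj.exists_comp_eqOn y
  have hquery (n : Fin m) (hn : n ≤ k) : nflQuery a f n = q n :=
    congrArg a <| nflHistory_eq_nflHistoryOfValues n.isLt.le fun i hi =>
      hf (lt_of_lt_of_le (Fin.lt_def.mpr hi) hn)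
  refine ha f j k (j.isLt.trans_le hm) (k.isLt.trans_le hm) (Fin.val_ne_of_ne hjk.ne) ?_
  rw [hquery j hjk.le, hquery k le_rfl, hjq]

theorem card_filter_comp_eq_of_injective [Fintype X] [DecidableEq X] [Fintype Y] [DecidableEq Y]
    {ι : Type*} [Fintype ι] {q q' : ι → X} (hq : q.Injective) (hq' : q'.Injective)
    (y : ι → Y) :
    #{f : X → Y | f ∘ q = y} = #{f : X → Y | f ∘ q' = y} := by
  obtain ⟨σ, hσ⟩ := Equiv.Perm.exists_extending_pair q q' hq hq'
  refine card_equiv (σ.arrowCongr (Equiv.refl Y)) fun f => ?_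
  simp [Function.comp_def, ← hσ]

theorem no_free_lunch_finite_general
    [Fintype X] [Fintype Y]
    [DecidableEq X] [DecidableEq Y]
    (a b : List (X × Y) → X) (ha : NonRepeating a) (hb : NonRepeating b)
    (m : ℕ) (hm : m ≤ Fintype.card X) (y : Fin m → Y) :
    (Finset.univ.filter fun f : X → Y => nflTrace a f m = y).card =
      (Finset.univ.filter fun f : X → Y => nflTrace b f m = y).card := by
  simp only [nflTrace_eq_iff]
  exact card_filter_comp_eq_of_injective (ha.injective_nflQueryOfValues hm y)
    (hb.injective_nflQueryOfValues hm y) y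

/-- **No-Free-Lunch (Wolpert–Macready, deterministic form).**
For any two deterministic non-repeating algorithms `a`, `b`, every `m ≤ |X|`
and every `y ∈ Yᵐ`, the number of functions `f : X → Y` with value-trace `y`
under `a` equals the number of those with value-trace `y` under `b`. -/
theorem no_free_lunch_finite
    [Fintype X] [Fintype Y] [Nonempty X] [Nonempty Y]
    [DecidableEq X] [DecidableEq Y]
    (a b : List (X × Y) → X) (ha : NonRepeating a) (hb : NonRepeating b)
    (m : ℕ) (hm : m ≤ Fintype.card X) (y : Fin m → Y) :
    (Finset.univ.filter fun f : X → Y => nflTrace a f m = y).card =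
      (Finset.univ.filter fun f : X → Y => nflTrace b f m = y).card :=
  no_free_lunch_finite_general a b ha hb m hm y
end

section
/- Let f be a measurable stochastic process on [0,1] such that the family of random variables {f(t), t ∈ [0,1]} is mutually independent. Then for Lebesgue-almost every t ∈ [0,1] the random variable f(t) is almost surely constant: there exists c(t) ∈ ℝ with P{ω : f(t,ω) = c(t)} = 1. -/
/-!
Replace `f` by the bounded centred process `u t = arctan (f t) - E[arctan (f t)]`. By independence,
`u s` and `u t` are orthogonal in `L²(P)` for `s ≠ t`, and the diagonal of `[0,1]²` is null, so for
every Borel `A` the variable `W_A = ∫_A u t dt` satisfies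
`E[W_A²] = ∫∫_{A×A} E[u s * u t] ds dt = 0`. Hence `∫_{A×B} u = 0` on every rectangle, so `u = 0`
almost everywhere on `[0,1] × Ω`, and Fubini gives `u t = 0` a.s. for almost every `t`.
-/

open MeasureTheory ProbabilityTheory Function Set Filter Real

theorem MeasureTheory.Measure.ae_prod_self_ne {T : Type*} [MeasurableSpace T] [MeasurableEq T]
    (μ : Measure T) [SFinite μ] [NullSingletonClass μ] : ∀ᵐ p ∂μ.prod μ, p.1 ≠ p.2 :=
  (ae_prod_iff_ae_ae measurableSet_diagonal.compl).2 <|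
    ae_of_all _ fun t => (μ.ae_ne t).mono fun _ h => h.symm

theorem MeasureTheory.Integrable.ae_eq_zero_of_forall_setIntegral_prod_eq_zero {α β E : Type*}
    [MeasurableSpace α] [MeasurableSpace β] [NormedAddCommGroup E] [NormedSpace ℝ E]
    [CompleteSpace E] {ρ : Measure (α × β)} {g : α × β → E} (hg : Integrable g ρ)
    (h : ∀ s, MeasurableSet s → ∀ t, MeasurableSet t → ∫ x in s ×ˢ t, g x ∂ρ = 0) :
    g =ᵐ[ρ] 0 := by
  have htotal : ∫ x, g x ∂ρ = 0 := by simpa using h univ .univ univ .univ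
  have hset : ∀ S, MeasurableSet S → ∫ x in S, g x ∂ρ = 0 := by
    intro S hS
    induction S, hS using MeasurableSpace.induction_on_inter generateFrom_prod.symm
      isPiSystem_prod with
    | empty => simp
    | basic S hS =>
      obtain ⟨s, hs, t, ht, rfl⟩ := hS
      exact h s hs t ht
    | compl S hS ih => simpa [ih, htotal] using integral_add_compl hS hg
    | iUnion S hdisj hmeas ih => simp [integral_iUnion hmeas hdisj hg.integrableOn, ih]
  exact hg.ae_eq_zero_of_forall_setIntegral_eq_zero fun S hS _ => hset S hS

section

variable {T Ω : Type*} [MeasurableSpace T] [MeasurableSpace Ω] {μ : Measure T} {P : Measure Ω}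

theorem ae_integral_eq_zero_of_ae_integral_mul_eq_zero [IsFiniteMeasure μ] [IsFiniteMeasure P]
    {u : T → Ω → ℝ} (hu : Measurable (uncurry u)) {C : ℝ} (hC : ∀ t ω, ‖u t ω‖ ≤ C)
    (horth : ∀ᵐ p ∂μ.prod μ, ∫ ω, u p.1 ω * u p.2 ω ∂P = 0) :
    ∀ᵐ ω ∂P, ∫ t, u t ω ∂μ = 0 := by
  set W : Ω → ℝ := fun ω => ∫ t, u t ω ∂μ
  have hW : StronglyMeasurable W :=
    (hu.comp measurable_swap).stronglyMeasurable.integral_prod_right'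
  have hW_bdd : ∀ ω, ‖W ω‖ ≤ C * μ.real univ := fun ω =>
    norm_integral_le_of_norm_le_const (ae_of_all _ (hC · ω))
  have huu : Integrable (uncurry fun ω (p : T × T) => u p.1 ω * u p.2 ω) (P.prod (μ.prod μ)) := by
    refine .of_bound ?_ (C * C) (ae_of_all _ fun ⟨ω, s, t⟩ => ?_)
    · exact ((hu.comp (measurable_snd.fst.prodMk measurable_fst)).mul
        (hu.comp (measurable_snd.snd.prodMk measurable_fst))).aestronglyMeasurable
    · rw [uncurry_apply_pair, norm_mul]
      exact mul_le_mul (hC s ω) (hC t ω) (norm_nonneg _) ((norm_nonneg _).trans (hC t ω))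
  have hW_sq : ∫ ω, W ω * W ω ∂P = 0 := calc
    _ = ∫ ω, ∫ p, u p.1 ω * u p.2 ω ∂μ.prod μ ∂P :=
      integral_congr_ae (ae_of_all _ fun ω => (integral_prod_mul _ _).symm)
    _ = ∫ p, ∫ ω, u p.1 ω * u p.2 ω ∂P ∂μ.prod μ := integral_integral_swap huu
    _ = 0 := by rw [integral_congr_ae horth, integral_zero]
  have hW_sq_int : Integrable (fun ω => W ω * W ω) P :=
    .of_bound (hW.mul hW).aestronglyMeasurable _ (ae_of_all _ fun ω => by
      rw [norm_mul]
      exact mul_le_mul (hW_bdd ω) (hW_bdd ω) (norm_nonneg _) ((norm_nonneg _).trans (hW_bdd ω)))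
  filter_upwards [(integral_eq_zero_iff_of_nonneg (fun ω => mul_self_nonneg (W ω))
    hW_sq_int).1 hW_sq] with ω hω
  exact mul_self_eq_zero.1 hω

theorem ae_ae_eq_zero_of_ae_integral_mul_eq_zero [IsFiniteMeasure μ] [IsFiniteMeasure P]
    {u : T → Ω → ℝ} (hu : Measurable (uncurry u)) {C : ℝ} (hC : ∀ t ω, ‖u t ω‖ ≤ C)
    (horth : ∀ᵐ p ∂μ.prod μ, ∫ ω, u p.1 ω * u p.2 ω ∂P = 0) :
    ∀ᵐ t ∂μ, ∀ᵐ ω ∂P, u t ω = 0 := by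
  have hint : Integrable (uncurry u) (μ.prod P) :=
    .of_bound hu.aestronglyMeasurable C (ae_of_all _ fun p => hC p.1 p.2)
  refine Measure.ae_ae_of_ae_prod (hint.ae_eq_zero_of_forall_setIntegral_prod_eq_zero ?_)
  intro A hA B hB
  have hA_orth : ∀ᵐ p ∂(μ.restrict A).prod (μ.restrict A), ∫ ω, u p.1 ω * u p.2 ω ∂P = 0 := by
    rw [Measure.prod_restrict]
    exact ae_restrict_of_ae horth
  have hW : ∀ᵐ ω ∂P.restrict B, ∫ t in A, u t ω ∂μ = 0 :=
    ae_restrict_of_ae (ae_integral_eq_zero_of_ae_integral_mul_eq_zero hu hC hA_orth)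
  rw [← Measure.prod_restrict, integral_prod_symm _ (hint.mono_measure ?_)]
  · exact integral_eq_zero_of_ae hW
  · rw [Measure.prod_restrict]; exact Measure.restrict_le_self

theorem ae_ae_eq_integral_of_pairwise_indepFun [IsFiniteMeasure μ] [NullSingletonClass μ]
    [MeasurableEq T] [IsProbabilityMeasure P] {Y : T → Ω → ℝ} (hY : Measurable (uncurry Y))
    {C : ℝ} (hC : ∀ t ω, ‖Y t ω‖ ≤ C) (hindep : Pairwise fun s t => IndepFun (Y s) (Y t) P) :
    ∀ᵐ t ∂μ, ∀ᵐ ω ∂P, Y t ω = ∫ ω', Y t ω' ∂P := by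
  set m : T → ℝ := fun t => ∫ ω, Y t ω ∂P
  set u : T → Ω → ℝ := fun t ω => Y t ω - m t
  have hm : Measurable m := hY.stronglyMeasurable.integral_prod_right'.measurable
  have hu : Measurable (uncurry u) := hY.sub (hm.comp measurable_fst)
  have hu_bdd : ∀ t ω, ‖u t ω‖ ≤ C + C := fun t ω => by
    refine (norm_sub_le _ _).trans (add_le_add (hC t ω) ?_)
    simpa using norm_integral_le_of_norm_le_const (μ := P) (ae_of_all _ (hC t))
  have hu_mean : ∀ t, ∫ ω, u t ω ∂P = 0 := fun t => by
    have hYt : Integrable (Y t) P := .of_bound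
      (hY.comp measurable_prodMk_left).aestronglyMeasurable C (ae_of_all _ (hC t))
    simp [u, m, integral_sub hYt (integrable_const _)]
  have hu_orth : ∀ s t, s ≠ t → ∫ ω, u s ω * u t ω ∂P = 0 := fun s t hst => by
    have hind : IndepFun (u s) (u t) P :=
      (hindep hst).comp (measurable_id.sub_const _) (measurable_id.sub_const _)
    rw [← Pi.mul_def, hind.integral_mul_eq_mul_integral
      (hu.comp measurable_prodMk_left).aestronglyMeasurable
      (hu.comp measurable_prodMk_left).aestronglyMeasurable, hu_mean, zero_mul]
  filter_upwards [ae_ae_eq_zero_of_ae_integral_mul_eq_zero hu hu_bdd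
    (μ.ae_prod_self_ne.mono fun p hp => hu_orth p.1 p.2 hp)] with t ht
  filter_upwards [ht] with ω hω
  exact sub_eq_zero.1 hω

theorem ae_exists_ae_eq_const_of_pairwise_indepFun [IsFiniteMeasure μ] [NullSingletonClass μ]
    [MeasurableEq T] [IsProbabilityMeasure P] {X : T → Ω → ℝ} (hX : Measurable (uncurry X))
    (hindep : Pairwise fun s t => IndepFun (X s) (X t) P) :
    ∀ᵐ t ∂μ, ∃ c, ∀ᵐ ω ∂P, X t ω = c := by
  have harctan := ae_ae_eq_integral_of_pairwise_indepFun (μ := μ) (C := π / 2)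
    (Y := fun t ω => arctan (X t ω)) (continuous_arctan.measurable.comp hX)
    (fun t ω => by
      simpa [abs_le] using ⟨(neg_pi_div_two_lt_arctan _).le, (arctan_lt_pi_div_two _).le⟩)
    (fun s t hst => (hindep hst).comp continuous_arctan.measurable continuous_arctan.measurable)
  filter_upwards [harctan] with t ht
  refine ⟨tan (∫ ω, arctan (X t ω) ∂P), ht.mono fun ω hω => ?_⟩
  rw [← hω, tan_arctan]

end

theorem measurable_indep_process_ae_degenerate
    {Ω : Type*} [MeasurableSpace Ω] (P : Measure Ω) [IsProbabilityMeasure P]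
    (f : ℝ → Ω → ℝ)
    (hmeas : Measurable fun p : Set.Icc (0 : ℝ) 1 × Ω => f p.1 p.2)
    (hindep : iIndepFun
      (fun t : Set.Icc (0 : ℝ) 1 => f t) P) :
    ∀ᵐ t ∂(volume.restrict (Set.Icc (0 : ℝ) 1)),
      ∃ c : ℝ, P {ω | f t ω = c} = 1 := by
  rw [ae_restrict_iff_subtype measurableSet_Icc]
  filter_upwards [ae_exists_ae_eq_const_of_pairwise_indepFun (μ := volume) hmeas
    fun s t hst => hindep.indepFun hst] with t ⟨c, hc⟩
  have hft : Measurable (f t) := hmeas.comp measurable_prodMk_left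
  refine ⟨c, ?_⟩
  rw [← measure_univ (μ := P)]
  exact (ae_iff_measure_eq (hft (measurableSet_singleton c)).nullMeasurableSet).1 hc
end

section
/- Let f be a measurable stochastic process on [0,1] whose random variables f(t) are pairwise independent, satisfy E[f(t)] = 0 for all t ∈ [0,1], and are uniformly bounded: there is a constant m with |f(t,ω)| < m for all t and ω. Define g(t,ω) = ∫₀ᵗ f(s,ω) ds. Then for every t ∈ [0,1], E[g(t)²] = 0. -/
/-!
Squaring the time integral and applying Fubini gives
`E[g(t)²] = ∫∫_{[0,t]²} E[f(s) f(u)] ds du`, the interchange being legitimate because `f` is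
bounded and jointly measurable. Off the diagonal, independence and centring give
`E[f(s) f(u)] = E[f(s)] E[f(u)] = 0`, and the diagonal is Lebesgue-null in `[0,t]²`.
-/

open MeasureTheory ProbabilityTheory Set

lemma MeasureTheory.Measure.ae_fst_ne_snd {α : Type*} [MeasurableSpace α] [MeasurableEq α]
    (μ ν : Measure α) [SFinite ν] [NullSingletonClass ν] : ∀ᵐ q ∂μ.prod ν, q.1 ≠ q.2 :=
  (Measure.ae_prod_iff_ae_ae measurableSet_diagonal.compl).2 <|
    .of_forall fun s => (ν.ae_ne s).mono fun _ h => Ne.symm h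

section SecondMoment

variable {α Ω : Type*} [MeasurableSpace α] [MeasurableSpace Ω] {μ : Measure α} {ν : Measure Ω}
  {F : α × Ω → ℝ} {C : ℝ}

lemma integrable_mul_sections_of_abs_le [IsFiniteMeasure μ] [IsFiniteMeasure ν]
    (hF : Measurable F) (hC : ∀ p, |F p| ≤ C) :
    Integrable (Function.uncurry fun ω (q : α × α) => F (q.1, ω) * F (q.2, ω))
      (ν.prod (μ.prod μ)) := by
  have hmeas : Measurable (Function.uncurry fun ω (q : α × α) => F (q.1, ω) * F (q.2, ω)) :=
    (hF.comp (measurable_snd.fst.prodMk measurable_fst)).mul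
      (hF.comp (measurable_snd.snd.prodMk measurable_fst))
  refine .of_bound hmeas.aestronglyMeasurable (C * C) (.of_forall fun z => ?_)
  rw [Real.norm_eq_abs, Function.uncurry_apply_pair, abs_mul]
  exact mul_le_mul (hC _) (hC _) (abs_nonneg _) ((abs_nonneg _).trans (hC (z.2.1, z.1)))

lemma integral_sq_integral_eq_integral_prod [IsFiniteMeasure μ] [IsFiniteMeasure ν]
    (hF : Measurable F) (hC : ∀ p, |F p| ≤ C) :
    ∫ ω, (∫ s, F (s, ω) ∂μ) ^ 2 ∂ν = ∫ q, ∫ ω, F (q.1, ω) * F (q.2, ω) ∂ν ∂μ.prod μ := by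
  simp_rw [sq, ← integral_prod_mul]
  exact integral_integral_swap (integrable_mul_sections_of_abs_le hF hC)

theorem integral_sq_integral_eq_zero [MeasurableEq α] [IsFiniteMeasure μ] [NullSingletonClass μ]
    [IsFiniteMeasure ν] (hF : Measurable F) (hC : ∀ p, |F p| ≤ C)
    (horth : ∀ᵐ q ∂μ.prod μ, q.1 ≠ q.2 → ∫ ω, F (q.1, ω) * F (q.2, ω) ∂ν = 0) :
    ∫ ω, (∫ s, F (s, ω) ∂μ) ^ 2 ∂ν = 0 := by
  rw [integral_sq_integral_eq_integral_prod hF hC]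
  exact integral_eq_zero_of_ae <| (horth.and (μ.ae_fst_ne_snd μ)).mono fun _ h => h.1 h.2

end SecondMoment

lemma ProbabilityTheory.IndepFun.integral_mul_eq_zero {Ω : Type*} [MeasurableSpace Ω]
    {P : Measure Ω} {X Y : Ω → ℝ} (h : IndepFun X Y P) (hX : AEStronglyMeasurable X P)
    (hY : AEStronglyMeasurable Y P) (hX0 : ∫ ω, X ω ∂P = 0) : ∫ ω, X ω * Y ω ∂P = 0 := by
  rw [h.integral_fun_mul_eq_mul_integral hX hY, hX0, zero_mul]

lemma measurable_projIcc_extend {Ω : Type*} [MeasurableSpace Ω] {a b : ℝ} (hab : a ≤ b)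
    {f : ℝ → Ω → ℝ} (hf : Measurable fun p : Icc a b × Ω => f p.1 p.2) :
    Measurable fun p : ℝ × Ω => f (projIcc a b hab p.1) p.2 :=
  hf.comp ((continuous_projIcc (h := hab)).measurable.prodMap measurable_id)

theorem integrated_process_second_moment_zero
    {Ω : Type*} [MeasurableSpace Ω] (P : Measure Ω) [IsProbabilityMeasure P]
    (f : ℝ → Ω → ℝ)
    (hmeas : Measurable fun p : Set.Icc (0 : ℝ) 1 × Ω => f p.1 p.2)
    (hindep : ∀ t ∈ Set.Icc (0 : ℝ) 1, ∀ s ∈ Set.Icc (0 : ℝ) 1, t ≠ s →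
      IndepFun (f t) (f s) P)
    (hmean : ∀ t ∈ Set.Icc (0 : ℝ) 1, ∫ ω, f t ω ∂P = 0)
    (hbdd : ∃ m : ℝ, ∀ t ∈ Set.Icc (0 : ℝ) 1, ∀ ω : Ω, |f t ω| < m)
    (g : ℝ → Ω → ℝ)
    (hg : ∀ t, ∀ ω, g t ω = ∫ s in (0 : ℝ)..t, f s ω) :
    ∀ t ∈ Set.Icc (0 : ℝ) 1, ∫ ω, (g t ω) ^ 2 ∂P = 0 := by
  rintro t ⟨ht0, ht1⟩
  obtain ⟨m, hm⟩ := hbdd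
  have hsection : ∀ r ∈ Icc (0 : ℝ) 1, AEStronglyMeasurable (f r) P := fun r hr =>
    (hmeas.comp (measurable_prodMk_left (x := (⟨r, hr⟩ : Icc (0 : ℝ) 1)))).aestronglyMeasurable
  have horth : ∀ s ∈ Icc (0 : ℝ) 1, ∀ u ∈ Icc (0 : ℝ) 1, s ≠ u → ∫ ω, f s ω * f u ω ∂P = 0 :=
    fun s hs u hu hsu => (hindep s hs u hu hsu).integral_mul_eq_zero (hsection s hs)
      (hsection u hu) (hmean s hs)
  set F : ℝ × Ω → ℝ := fun p => f (projIcc 0 1 zero_le_one p.1) p.2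
  have hF : ∀ s ∈ Icc (0 : ℝ) 1, ∀ ω, F (s, ω) = f s ω := fun s hs ω => by
    simp only [F, projIcc_of_mem zero_le_one hs]
  have hsub : Ioc 0 t ⊆ Icc (0 : ℝ) 1 := fun s hs => ⟨hs.1.le, hs.2.trans ht1⟩
  have hgF : ∀ ω, g t ω = ∫ s in Ioc 0 t, F (s, ω) := fun ω => by
    rw [hg, intervalIntegral.integral_of_le ht0]
    exact setIntegral_congr_fun measurableSet_Ioc fun s hs => (hF s (hsub hs) ω).symm
  simp_rw [hgF]
  refine integral_sq_integral_eq_zero (measurable_projIcc_extend zero_le_one hmeas)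
    (fun p => (hm _ (projIcc 0 1 zero_le_one p.1).2 p.2).le) ?_
  rw [Measure.prod_restrict]
  filter_upwards [ae_restrict_mem (measurableSet_Ioc.prod measurableSet_Ioc)]
    with ⟨s, u⟩ ⟨hs, hu⟩ hsu
  simp only [hF s (hsub hs), hF u (hsub hu)]
  exact horth s (hsub hs) u (hsub hu) hsu
end

section
/- Let f be a measurable stochastic process on [0,1] such that E[f(t)] = 0 and E[f(t)²] = 1 for all t ∈ [0,1], and suppose there exists ρ ∈ ℝ such that E[f(t)f(s)] = ρ for all t, s ∈ [0,1] with t ≠ s. Then the process is constant in the sense that for all t, s ∈ [0,1], P{ω : f(t,ω) = f(s,ω)} = 1; equivalently, there exists a random variable X : Ω → ℝ such that P{ω : f(t,ω) = X(ω)} = 1 for every t ∈ [0,1]. -/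
open MeasureTheory Set Function
open scoped ENNReal

/-!
Let `ν` be Lebesgue measure on `[0,1]`. The diagonal of `[0,1]²` is `ν ⊗ ν`-null, so by Fubini
`E[(∫ g f dν)²] = ρ (∫ g dν)²` for every bounded weight `g`. For `g = 1_{(-∞,q)} - ν(-∞,q)` the
right side vanishes; hence, with `Y(ω) = ∫ f(t,ω) dν(t)`, almost every path satisfies
`∫_{(-∞,q)} (f(·,ω) - Y(ω)) dν = 0` for all rational `q`, and is therefore `ν`-a.e. equal to
`Y(ω)`. Swapping the quantifiers, `f(t) = Y` a.s. for two distinct times `t ≠ s`, so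
`ρ = E[f(t) f(s)] = E[f(t)²] = 1`, and then `E[(f(t) - f(s))²] = 2 - 2ρ = 0` for all `t, s`.
-/

theorem ae_eq_zero_of_forall_setIntegral_isPiSystem_eq_zero {α E : Type*} [NormedAddCommGroup E]
    [NormedSpace ℝ E] [CompleteSpace E] {m : MeasurableSpace α} {μ : Measure α}
    {S : Set (Set α)} (h_eq : m = MeasurableSpace.generateFrom S) (h_inter : IsPiSystem S)
    {f : α → E} (hf : Integrable f μ) (h_univ : ∫ x, f x ∂μ = 0)
    (h_basic : ∀ s ∈ S, ∫ x in s, f x ∂μ = 0) : f =ᵐ[μ] 0 := by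
  suffices h : ∀ s, MeasurableSet s → ∫ x in s, f x ∂μ = 0 from
    hf.ae_eq_zero_of_forall_setIntegral_eq_zero fun s hs _ => h s hs
  intro s hs
  induction s, hs using MeasurableSpace.induction_on_inter h_eq h_inter with
  | empty => simp
  | basic s hs => exact h_basic s hs
  | compl s hs ihs => rw [setIntegral_compl hs hf, ihs, h_univ, sub_zero]
  | iUnion s hd hs ihs => simp [integral_iUnion hs hd hf.integrableOn, ihs]

theorem MeasureTheory.Measure.ae_fst_ne_snd_s7 {T : Type*} [MeasurableSpace T] [MeasurableEq T]
    (ν : Measure T) [SFinite ν] [NullSingletonClass ν] : ∀ᵐ p ∂ν.prod ν, p.1 ≠ p.2 :=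
  (Measure.ae_prod_iff_ae_ae measurableSet_diagonal.compl).2 <|
    ae_of_all _ fun t => by simpa [ne_comm] using Measure.ae_ne ν t

section SquareIntegrable

variable {Ω : Type*} [MeasurableSpace Ω] {P : Measure Ω}

theorem lintegral_enorm_mul_le {u v : Ω → ℝ} (hu : Integrable (fun ω => u ω ^ 2) P)
    (hv : Integrable (fun ω => v ω ^ 2) P) :
    ∫⁻ ω, ‖u ω * v ω‖ₑ ∂P ≤ ENNReal.ofReal ((∫ ω, u ω ^ 2 ∂P + ∫ ω, v ω ^ 2 ∂P) / 2) := by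
  have hsum : Integrable (fun ω => (u ω ^ 2 + v ω ^ 2) / 2) P := (hu.add hv).div_const 2
  rw [← integral_add hu hv, ← integral_div,
    ofReal_integral_eq_lintegral_ofReal hsum (ae_of_all _ fun ω => by positivity)]
  refine lintegral_mono fun ω => ?_
  rw [Real.enorm_eq_ofReal_abs, abs_mul]
  refine ENNReal.ofReal_le_ofReal ?_
  nlinarith [two_mul_le_add_sq |u ω| |v ω|, sq_abs (u ω), sq_abs (v ω)]

theorem ae_eq_of_integral_sq_add_integral_sq_eq {X Y : Ω → ℝ} (hX : MemLp X 2 P)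
    (hY : MemLp Y 2 P) (h : ∫ ω, X ω ^ 2 ∂P + ∫ ω, Y ω ^ 2 ∂P = 2 * ∫ ω, X ω * Y ω ∂P) :
    X =ᵐ[P] Y := by
  have hXY : Integrable (fun ω => X ω * Y ω) P := hX.integrable_mul hY
  have hsq : ∫ ω, (X ω - Y ω) ^ 2 ∂P = 0 := by
    have hsum : Integrable (fun ω => X ω ^ 2 + Y ω ^ 2) P :=
      hX.integrable_sq.add hY.integrable_sq
    simp_rw [sub_sq', mul_assoc]
    rw [integral_sub hsum (hXY.const_mul 2), integral_add hX.integrable_sq hY.integrable_sq,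
      integral_const_mul, h, sub_self]
  filter_upwards [(integral_eq_zero_iff_of_nonneg (fun ω => sq_nonneg _)
    (hX.sub hY).integrable_sq).1 hsq] with ω hω
  simpa [sub_eq_zero] using hω

theorem measure_setOf_eq_eq_one_of_ae_eq [IsProbabilityMeasure P] {X Y : Ω → ℝ} (h : X =ᵐ[P] Y) :
    P {ω | X ω = Y ω} = 1 :=
  (measure_congr (ae_eq_univ.2 (ae_iff.1 h))).trans measure_univ

end SquareIntegrable

theorem integrable_prod_of_forall_lintegral_le {S Ω : Type*} [MeasurableSpace S]
    [MeasurableSpace Ω] {μ : Measure S} [IsFiniteMeasure μ] {P : Measure Ω} [SFinite P]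
    {G : S × Ω → ℝ} (hG : Measurable G) {M : ℝ≥0∞} (hM : M ≠ ∞)
    (h : ∀ s, ∫⁻ ω, ‖G (s, ω)‖ₑ ∂P ≤ M) : Integrable G (μ.prod P) := by
  refine ⟨hG.aestronglyMeasurable, ?_⟩
  calc ∫⁻ z, ‖G z‖ₑ ∂μ.prod P = ∫⁻ s, ∫⁻ ω, ‖G (s, ω)‖ₑ ∂P ∂μ :=
        lintegral_prod _ hG.enorm.aemeasurable
    _ ≤ ∫⁻ _, M ∂μ := lintegral_mono h
    _ < ∞ := by simpa using ENNReal.mul_lt_top hM.lt_top (measure_lt_top μ univ)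

section Averages

variable {T Ω : Type*} [MeasurableSpace T] [MeasurableSpace Ω] {ν : Measure T} {P : Measure Ω}
  {F : T → Ω → ℝ} {C ρ : ℝ}

theorem integrable_uncurry_of_integral_sq_le [IsFiniteMeasure ν] [IsFiniteMeasure P]
    (hF : Measurable (uncurry F)) (hsq : ∀ t, Integrable (fun ω => F t ω ^ 2) P)
    (hC : ∀ t, ∫ ω, F t ω ^ 2 ∂P ≤ C) :
    Integrable (uncurry F) (ν.prod P) := by
  refine integrable_prod_of_forall_lintegral_le hF (M := .ofReal ((C + P.real univ) / 2))
    ENNReal.ofReal_ne_top fun t => ?_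
  calc ∫⁻ ω, ‖F t ω‖ₑ ∂P = ∫⁻ ω, ‖F t ω * 1‖ₑ ∂P := by simp
    _ ≤ ENNReal.ofReal ((C + P.real univ) / 2) := by
      refine (lintegral_enorm_mul_le (hsq t) (integrable_const _)).trans ?_
      gcongr
      · exact hC t
      · simp

theorem integral_sq_integral_eq_integral_integral_mul [IsFiniteMeasure ν] [SFinite P]
    (hF : Measurable (uncurry F)) (hsq : ∀ t, Integrable (fun ω => F t ω ^ 2) P)
    (hC : ∀ t, ∫ ω, F t ω ^ 2 ∂P ≤ C) :
    Integrable (fun ω => (∫ t, F t ω ∂ν) ^ 2) P ∧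
      ∫ ω, (∫ t, F t ω ∂ν) ^ 2 ∂P = ∫ p, ∫ ω, F p.1 ω * F p.2 ω ∂P ∂ν.prod ν := by
  have hG : Integrable (fun q : (T × T) × Ω => F q.1.1 q.2 * F q.1.2 q.2) ((ν.prod ν).prod P) := by
    refine integrable_prod_of_forall_lintegral_le (by fun_prop) (M := .ofReal C)
      ENNReal.ofReal_ne_top fun p => ?_
    refine (lintegral_enorm_mul_le (hsq p.1) (hsq p.2)).trans (ENNReal.ofReal_le_ofReal ?_)
    linarith [hC p.1, hC p.2]
  have hsquare : ∀ ω, ∫ p, F p.1 ω * F p.2 ω ∂ν.prod ν = (∫ t, F t ω ∂ν) ^ 2 := fun ω => by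
    rw [sq, integral_prod_mul (fun t => F t ω) (fun t => F t ω)]
  refine ⟨by simpa only [hsquare] using hG.integral_prod_right, ?_⟩
  simp_rw [← hsquare]
  exact (integral_integral_swap hG).symm

theorem integral_sq_integral_mul_eq [IsFiniteMeasure ν] [SFinite P]
    (hF : Measurable (uncurry F)) (hsq : ∀ t, Integrable (fun ω => F t ω ^ 2) P)
    (hC : ∀ t, ∫ ω, F t ω ^ 2 ∂P ≤ C) (hcov : ∀ᵐ p ∂ν.prod ν, ∫ ω, F p.1 ω * F p.2 ω ∂P = ρ)
    {g : T → ℝ} (hg : Measurable g) {K : ℝ} (hK : ∀ t, |g t| ≤ K) :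
    Integrable (fun ω => (∫ t, g t * F t ω ∂ν) ^ 2) P ∧
      ∫ ω, (∫ t, g t * F t ω ∂ν) ^ 2 ∂P = ρ * (∫ t, g t ∂ν) ^ 2 := by
  have hgF_sq : ∀ t, Integrable (fun ω => (g t * F t ω) ^ 2) P := fun t => by
    simpa only [mul_pow] using (hsq t).const_mul (g t ^ 2)
  have hgF_le : ∀ t, ∫ ω, (g t * F t ω) ^ 2 ∂P ≤ K ^ 2 * C := fun t => by
    simp_rw [mul_pow]
    rw [integral_const_mul]
    exact mul_le_mul (sq_le_sq' (abs_le.1 (hK t)).1 (abs_le.1 (hK t)).2) (hC t)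
      (integral_nonneg fun ω => sq_nonneg _) (sq_nonneg K)
  obtain ⟨hint, heq⟩ := integral_sq_integral_eq_integral_integral_mul
    (ν := ν) (F := fun t ω => g t * F t ω) ((hg.comp measurable_fst).mul hF) hgF_sq hgF_le
  refine ⟨hint, heq.trans ?_⟩
  calc ∫ p, ∫ ω, g p.1 * F p.1 ω * (g p.2 * F p.2 ω) ∂P ∂ν.prod ν
      = ∫ p, ρ * (g p.1 * g p.2) ∂ν.prod ν := by
        refine integral_congr_ae ?_
        filter_upwards [hcov] with p hp
        simp_rw [mul_mul_mul_comm (g p.1) (F p.1 _), integral_const_mul, hp, mul_comm]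
    _ = ρ * (∫ t, g t ∂ν) ^ 2 := by rw [integral_const_mul, integral_prod_mul, sq]

theorem ae_setIntegral_eq_measureReal_mul_integral [IsProbabilityMeasure ν] [IsFiniteMeasure P]
    (hF : Measurable (uncurry F)) (hsq : ∀ t, Integrable (fun ω => F t ω ^ 2) P)
    (hC : ∀ t, ∫ ω, F t ω ^ 2 ∂P ≤ C) (hcov : ∀ᵐ p ∂ν.prod ν, ∫ ω, F p.1 ω * F p.2 ω ∂P = ρ)
    {A : Set T} (hA : MeasurableSet A) :
    ∀ᵐ ω ∂P, ∫ t in A, F t ω ∂ν = ν.real A * ∫ t, F t ω ∂ν := by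
  set g : T → ℝ := fun t => A.indicator 1 t - ν.real A
  have hK : ∀ t, |g t| ≤ 1 + ν.real A := fun t => by
    refine (abs_sub _ _).trans (add_le_add ?_ (abs_of_nonneg measureReal_nonneg).le)
    by_cases ht : t ∈ A <;> simp [ht]
  obtain ⟨hint, heq⟩ := integral_sq_integral_mul_eq (g := g) hF hsq hC hcov
    ((measurable_const.indicator hA).sub measurable_const) hK
  have hmean : ∫ t, g t ∂ν = 0 := by
    rw [integral_sub ((integrable_const 1).indicator hA) (integrable_const _),
      integral_indicator_one hA]
    simp
  rw [hmean, sq, mul_zero, mul_zero] at heq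
  filter_upwards [(integral_eq_zero_iff_of_nonneg (fun ω => sq_nonneg _) hint).1 heq,
    (integrable_uncurry_of_integral_sq_le (ν := ν) hF hsq hC).prod_left_ae]
    with ω hω (hpath : Integrable (fun t => F t ω) ν)
  have hweight : ∀ t, g t * F t ω = A.indicator (fun t => F t ω) t - ν.real A * F t ω :=
    fun t => by by_cases ht : t ∈ A <;> simp [g, ht, sub_mul]
  have hgF : ∫ t, g t * F t ω ∂ν = 0 := by simpa using hω
  rwa [integral_congr_ae (ae_of_all _ hweight), integral_sub (hpath.indicator hA)
    (hpath.const_mul _), integral_indicator hA, integral_const_mul, sub_eq_zero] at hgF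

theorem eq_one_of_integral_mul_eq_of_ae_eq [SFinite ν] [NeZero ν] {Y : Ω → ℝ}
    (hY : ∀ᵐ t ∂ν, F t =ᵐ[P] Y) (hvar : ∀ᵐ t ∂ν, ∫ ω, F t ω ^ 2 ∂P = 1)
    (hcov : ∀ᵐ p ∂ν.prod ν, ∫ ω, F p.1 ω * F p.2 ω ∂P = ρ) : ρ = 1 := by
  have : NeZero (ν.prod ν) :=
    ⟨by simpa [← Measure.measure_univ_eq_zero, ← univ_prod_univ] using NeZero.ne ν⟩
  obtain ⟨p, hp1, hp2, hvar1, hcov12⟩ := ((Measure.quasiMeasurePreserving_fst.ae hY).and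
    ((Measure.quasiMeasurePreserving_snd.ae hY).and
      ((Measure.quasiMeasurePreserving_fst.ae hvar).and hcov))).exists
  calc ρ = ∫ ω, F p.1 ω * F p.2 ω ∂P := hcov12.symm
    _ = ∫ ω, F p.1 ω ^ 2 ∂P := by
      refine integral_congr_ae ?_
      filter_upwards [hp1, hp2] with ω h1 h2
      rw [h1, h2, sq]
    _ = 1 := hvar1

end Averages

theorem ae_eq_integral_of_integral_mul_eq {Ω : Type*} [MeasurableSpace Ω] {ν : Measure ℝ}
    [IsProbabilityMeasure ν] {P : Measure Ω} [IsFiniteMeasure P] {F : ℝ → Ω → ℝ} {C ρ : ℝ}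
    (hF : Measurable (uncurry F)) (hsq : ∀ t, Integrable (fun ω => F t ω ^ 2) P)
    (hC : ∀ t, ∫ ω, F t ω ^ 2 ∂P ≤ C) (hcov : ∀ᵐ p ∂ν.prod ν, ∫ ω, F p.1 ω * F p.2 ω ∂P = ρ) :
    ∀ᵐ t ∂ν, F t =ᵐ[P] fun ω => ∫ s, F s ω ∂ν := by
  refine (Measure.ae_ae_comm (p := fun ω t => F t ω = ∫ s, F s ω ∂ν)
    (measurableSet_eq_fun (hF.comp measurable_swap)
      ((hF.stronglyMeasurable.integral_prod_left' (μ := ν)).measurable.comp measurable_fst))).1 ?_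
  filter_upwards [(integrable_uncurry_of_integral_sq_le (ν := ν) hF hsq hC).prod_left_ae,
    ae_all_iff.2 fun q : ℚ => ae_setIntegral_eq_measureReal_mul_integral hF hsq hC hcov
      (measurableSet_Iio (a := (q : ℝ)))] with ω (hpath : Integrable (fun t => F t ω) ν) hrays
  have hdev : (fun t => F t ω - ∫ s, F s ω ∂ν) =ᵐ[ν] 0 := by
    refine ae_eq_zero_of_forall_setIntegral_isPiSystem_eq_zero
      (BorelSpace.measurable_eq.trans Real.borel_eq_generateFrom_Iio_rat) Real.isPiSystem_Iio_rat
      (hpath.sub (integrable_const _)) ?_ ?_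
    · rw [integral_sub hpath (integrable_const _)]
      simp
    · simp only [mem_iUnion, mem_singleton_iff]
      rintro _ ⟨q, rfl⟩
      rw [integral_sub hpath.integrableOn (integrableOn_const (measure_ne_top _ _)),
        setIntegral_const, smul_eq_mul, hrays q, sub_self]
  filter_upwards [hdev] with t ht
  simpa [sub_eq_zero] using ht

theorem measurable_uncurry_indicator_Icc {Ω : Type*} [MeasurableSpace Ω] {a b : ℝ} (hab : a ≤ b)
    {f : ℝ → Ω → ℝ} (hf : Measurable fun p : Icc a b × Ω => f p.1 p.2) :
    Measurable (uncurry ((Icc a b).indicator f)) := by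
  have hproj : Measurable fun p : ℝ × Ω => f (projIcc a b hab p.1) p.2 :=
    hf.comp (((continuous_projIcc (h := hab)).measurable.comp measurable_fst).prodMk measurable_snd)
  have hpiecewise : uncurry ((Icc a b).indicator f) =
      fun p => if p.1 ∈ Icc a b then f (projIcc a b hab p.1) p.2 else 0 := by
    ext ⟨t, ω⟩
    by_cases ht : t ∈ Icc a b
    · simp [ht, projIcc_of_mem hab ht]
    · simp [ht]
  rw [hpiecewise]
  exact Measurable.ite (measurableSet_Icc.preimage measurable_fst) hproj measurable_const

theorem nfl_normalized_process_is_constant_general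
    {Ω : Type*} [MeasurableSpace Ω] (P : Measure Ω) [IsProbabilityMeasure P]
    (f : ℝ → Ω → ℝ)
    (hmeas : Measurable fun p : Set.Icc (0 : ℝ) 1 × Ω => f p.1 p.2)
    (hvar : ∀ t ∈ Set.Icc (0 : ℝ) 1, ∫ ω, (f t ω) ^ 2 ∂P = 1)
    (ρ : ℝ)
    (hcov : ∀ t ∈ Set.Icc (0 : ℝ) 1, ∀ s ∈ Set.Icc (0 : ℝ) 1, t ≠ s →
      ∫ ω, f t ω * f s ω ∂P = ρ) :
    (∀ t ∈ Set.Icc (0 : ℝ) 1, ∀ s ∈ Set.Icc (0 : ℝ) 1,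
        P {ω | f t ω = f s ω} = 1) ∧
    ∃ X : Ω → ℝ, ∀ t ∈ Set.Icc (0 : ℝ) 1, P {ω | f t ω = X ω} = 1 := by
  set I := Icc (0 : ℝ) 1
  set F := I.indicator f
  set ν := volume.restrict I
  have : IsProbabilityMeasure ν := ⟨by simp [ν, I]⟩
  have hF : Measurable (uncurry F) := measurable_uncurry_indicator_Icc zero_le_one hmeas
  have hsq : ∀ t ∈ I, Integrable (fun ω => f t ω ^ 2) P := fun t ht =>
    integrable_of_integral_eq_one (hvar t ht)
  have hL2 : ∀ t ∈ I, MemLp (f t) 2 P := fun t ht =>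
    (memLp_two_iff_integrable_sq
      (hmeas.comp (measurable_prodMk_left (x := (⟨t, ht⟩ : I)))).aestronglyMeasurable).2 (hsq t ht)
  have hFsq : ∀ t, Integrable (fun ω => F t ω ^ 2) P := fun t => by
    by_cases ht : t ∈ I <;> simp [F, ht, hsq]
  have hFvar : ∀ t, ∫ ω, F t ω ^ 2 ∂P ≤ 1 := fun t => by
    by_cases ht : t ∈ I <;> simp [F, ht, hvar]
  have hcovF : ∀ᵐ p ∂ν.prod ν, ∫ ω, F p.1 ω * F p.2 ω ∂P = ρ := by
    filter_upwards [Measure.quasiMeasurePreserving_fst.ae (ae_restrict_mem measurableSet_Icc),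
      Measure.quasiMeasurePreserving_snd.ae (ae_restrict_mem measurableSet_Icc),
      Measure.ae_fst_ne_snd_s7 ν] with p (h1 : p.1 ∈ I) (h2 : p.2 ∈ I) hne
    simpa [F, h1, h2] using hcov _ h1 _ h2 hne
  have hFvar_ae : ∀ᵐ t ∂ν, ∫ ω, F t ω ^ 2 ∂P = 1 :=
    (ae_restrict_mem measurableSet_Icc).mono fun t (ht : t ∈ I) => by simp [F, ht, hvar t ht]
  have hρ : ρ = 1 := eq_one_of_integral_mul_eq_of_ae_eq
    (ae_eq_integral_of_integral_mul_eq hF hFsq hFvar hcovF) hFvar_ae hcovF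
  have hae : ∀ t ∈ I, ∀ s ∈ I, f t =ᵐ[P] f s := fun t ht s hs => by
    rcases eq_or_ne t s with rfl | hts
    · rfl
    · refine ae_eq_of_integral_sq_add_integral_sq_eq (hL2 t ht) (hL2 s hs) ?_
      rw [hvar t ht, hvar s hs, hcov t ht s hs hts, hρ]
      norm_num
  exact ⟨fun t ht s hs => measure_setOf_eq_eq_one_of_ae_eq (hae t ht s hs),
    f 0, fun t ht => measure_setOf_eq_eq_one_of_ae_eq (hae t ht 0 ⟨le_rfl, zero_le_one⟩)⟩

theorem nfl_normalized_process_is_constant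
    {Ω : Type*} [MeasurableSpace Ω] (P : Measure Ω) [IsProbabilityMeasure P]
    (f : ℝ → Ω → ℝ)
    (hmeas : Measurable fun p : Set.Icc (0 : ℝ) 1 × Ω => f p.1 p.2)
    (hmean : ∀ t ∈ Set.Icc (0 : ℝ) 1, ∫ ω, f t ω ∂P = 0)
    (hvar : ∀ t ∈ Set.Icc (0 : ℝ) 1, ∫ ω, (f t ω) ^ 2 ∂P = 1)
    (ρ : ℝ)
    (hcov : ∀ t ∈ Set.Icc (0 : ℝ) 1, ∀ s ∈ Set.Icc (0 : ℝ) 1, t ≠ s →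
      ∫ ω, f t ω * f s ω ∂P = ρ) :
    (∀ t ∈ Set.Icc (0 : ℝ) 1, ∀ s ∈ Set.Icc (0 : ℝ) 1,
        P {ω | f t ω = f s ω} = 1) ∧
    ∃ X : Ω → ℝ, ∀ t ∈ Set.Icc (0 : ℝ) 1, P {ω | f t ω = X ω} = 1 :=
  nfl_normalized_process_is_constant_general P f hmeas hvar ρ hcov
end

section
/- Let f be a measurable stochastic process on [0,1] such that E[f(t)] = 0 and E[f(t)²] = 1 for all t ∈ [0,1], and suppose there exists ρ ∈ ℝ such that E[f(t)f(s)] = ρ for all t, s ∈ [0,1] with t ≠ s. Then ρ = 1. -/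
/-!
Write `Y_A = ∫_A f(t) dt` and `X = Y_[0,1]`. The diagonal of `[0,1]²` is null, so Fubini gives
`E[Y_A Y_B] = ρ |A| |B|`; hence `E[(Y_A - |A| X)²] = 0`, i.e. `Y_A = |A| X` almost surely, for
every `A`. Thus `f(t, ω) - X(ω)` integrates to zero over every measurable rectangle of
`[0,1] × Ω`, so it vanishes almost everywhere: `f(t) = X` almost surely for almost every `t`.
For two distinct such `t, s` we get `ρ = E[f(t) f(s)] = E[f(t)²] = 1`.
-/

open MeasureTheory

section
variable {α β : Type*} [MeasurableSpace α] [MeasurableSpace β] {μ : Measure α} {ν : Measure β}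

lemma integral_norm_mul_le_of_memLp_two {u v : α → ℝ} (hu : MemLp u 2 μ) (hv : MemLp v 2 μ) :
    ∫ x, ‖u x * v x‖ ∂μ ≤ (∫ x, u x ^ 2 ∂μ + ∫ x, v x ^ 2 ∂μ) / 2 := by
  have hu2 := hu.integrable_sq
  have hv2 := hv.integrable_sq
  rw [← integral_add hu2 hv2, ← integral_div]
  refine integral_mono (hu.integrable_mul hv).norm ((hu2.add hv2).div_const 2) fun x => ?_
  have := two_mul_le_add_sq |u x| |v x|
  rw [sq_abs, sq_abs] at this
  simp only [norm_mul, Real.norm_eq_abs]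
  linarith

lemma integrable_prod_of_integral_norm_le [IsFiniteMeasure μ] [SFinite ν] {f : α × β → ℝ}
    (hf : AEStronglyMeasurable f (μ.prod ν)) (hint : ∀ x, Integrable (fun y => f (x, y)) ν)
    {C : ℝ} (hC : ∀ x, ∫ y, ‖f (x, y)‖ ∂ν ≤ C) : Integrable f (μ.prod ν) := by
  refine (integrable_prod_iff hf).2 ⟨ae_of_all _ hint, (integrable_const C).mono'
    hf.norm.integral_prod_right' (ae_of_all _ fun x => ?_)⟩
  rw [Real.norm_of_nonneg (integral_nonneg fun _ => norm_nonneg _)]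
  exact hC x

lemma ae_prod_fst_ne_snd {μ ν : Measure α} [SFinite ν] [MeasurableEq α]
    [NullSingletonClass ν] : ∀ᵐ p ∂μ.prod ν, p.1 ≠ p.2 :=
  (Measure.ae_prod_iff_ae_ae measurableSet_diagonal.compl).2
    (ae_of_all _ fun x => (ν.ae_ne x).mono fun _ h => h.symm)

lemma exists_ne_of_ae [NeZero μ] [NullSingletonClass μ] {p : α → Prop} (h : ∀ᵐ x ∂μ, p x) :
    ∃ x y, x ≠ y ∧ p x ∧ p y := by
  obtain ⟨x, hx⟩ := h.exists
  obtain ⟨y, hy, hyx⟩ := (h.and (μ.ae_ne x)).exists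
  exact ⟨x, y, hyx.symm, hx, hy⟩

lemma ae_eq_zero_of_forall_setIntegral_prod_eq_zero {μ : Measure (α × β)} {f : α × β → ℝ}
    (hf : Integrable f μ) (h : ∀ ⦃s : Set α⦄, MeasurableSet s → ∀ ⦃t : Set β⦄, MeasurableSet t →
      ∫ x in s ×ˢ t, f x ∂μ = 0) : f =ᵐ[μ] 0 := by
  have hfin : ∀ (g : α × β → ℝ) (s : Set (α × β)), Integrable g μ →
      ∫⁻ x in s, ENNReal.ofReal (g x) ∂μ ≠ ⊤ := fun g s hg =>
    ((lintegral_mono fun x => Real.ofReal_le_enorm (g x)).trans_lt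
      hg.integrableOn.hasFiniteIntegral).ne
  have hpos_neg : (fun x => ENNReal.ofReal (f x)) =ᵐ[μ] fun x => ENNReal.ofReal (-f x) := by
    refine ae_eq_of_setLIntegral_prod_eq (by fun_prop) (by fun_prop) ?_ fun s hs t ht => ?_
    · simpa using hfin f Set.univ hf
    · have := h hs ht
      rw [integral_eq_lintegral_pos_part_sub_lintegral_neg_part hf.integrableOn, sub_eq_zero,
        ENNReal.toReal_eq_toReal_iff' (hfin f _ hf) (hfin (fun x => -f x) _ hf.neg)] at this
      exact this
  filter_upwards [hpos_neg] with x hx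
  rcases le_total (f x) 0 with hle | hle
  · rw [ENNReal.ofReal_of_nonpos hle, eq_comm, ENNReal.ofReal_eq_zero] at hx
    exact le_antisymm hle (by simpa using hx)
  · rw [ENNReal.ofReal_of_nonpos (neg_nonpos.2 hle), ENNReal.ofReal_eq_zero] at hx
    exact le_antisymm hx hle

lemma ae_eq_const_mul_of_integral_mul_eq {u w : α → ℝ} {c : ℝ}
    (huu : Integrable (fun x => u x * u x) μ) (huw : Integrable (fun x => u x * w x) μ)
    (hww : Integrable (fun x => w x * w x) μ) (hu : ∫ x, u x * u x ∂μ = c * ∫ x, u x * w x ∂μ)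
    (hw : ∫ x, u x * w x ∂μ = c * ∫ x, w x * w x ∂μ) :
    u =ᵐ[μ] fun x => c * w x := by
  have hexp : (fun x => (u x - c * w x) ^ 2)
      = fun x => u x * u x - 2 * c * (u x * w x) + c ^ 2 * (w x * w x) := by
    ext x; ring
  have hsub : Integrable (fun x => u x * u x - 2 * c * (u x * w x)) μ := huu.sub (huw.const_mul _)
  have hint : Integrable (fun x => (u x - c * w x) ^ 2) μ := by
    rw [hexp]; exact hsub.add (hww.const_mul _)
  have hzero : ∫ x, (u x - c * w x) ^ 2 ∂μ = 0 := by
    rw [hexp, integral_add hsub (hww.const_mul _), integral_sub huu (huw.const_mul _),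
      integral_const_mul, integral_const_mul, hu, hw]
    ring
  filter_upwards [(integral_eq_zero_iff_of_nonneg (fun x => sq_nonneg _) hint).1 hzero] with x hx
  exact sub_eq_zero.1 (pow_eq_zero_iff two_ne_zero |>.1 hx)

end

section Correlation

variable {T Ω : Type*} [MeasurableSpace T] [MeasurableSpace Ω] {μ μ₁ μ₂ : Measure T}
  {P : Measure Ω} {F : T × Ω → ℝ}

lemma memLp_two_of_integral_sq_eq_one (hF : Measurable F)
    (hvar : ∀ t, ∫ ω, F (t, ω) ^ 2 ∂P = 1) (t : T) : MemLp (fun ω => F (t, ω)) 2 P :=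
  (memLp_two_iff_integrable_sq (hF.comp measurable_prodMk_left).aestronglyMeasurable).2
    (.of_integral_ne_zero (f := fun ω => F (t, ω) ^ 2) (by rw [hvar t]; exact one_ne_zero))

lemma integrable_mul_of_integral_sq_eq_one [IsFiniteMeasure μ₁] [IsFiniteMeasure μ₂]
    [SFinite P] (hF : Measurable F) (hvar : ∀ t, ∫ ω, F (t, ω) ^ 2 ∂P = 1) :
    Integrable (fun q : (T × T) × Ω => F (q.1.1, q.2) * F (q.1.2, q.2)) ((μ₁.prod μ₂).prod P) := by
  have hL2 := memLp_two_of_integral_sq_eq_one hF hvar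
  refine integrable_prod_of_integral_norm_le (C := 1)
    ((hF.comp (measurable_fst.fst.prodMk measurable_snd)).mul
      (hF.comp (measurable_fst.snd.prodMk measurable_snd))).aestronglyMeasurable
    (fun p => (hL2 p.1).integrable_mul (hL2 p.2)) fun p => ?_
  calc ∫ ω, ‖F (p.1, ω) * F (p.2, ω)‖ ∂P
      ≤ (∫ ω, F (p.1, ω) ^ 2 ∂P + ∫ ω, F (p.2, ω) ^ 2 ∂P) / 2 :=
        integral_norm_mul_le_of_memLp_two (hL2 p.1) (hL2 p.2)
    _ = 1 := by rw [hvar, hvar]; norm_num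

lemma integrable_of_integral_sq_eq_one [IsFiniteMeasure μ] [IsFiniteMeasure P]
    (hF : Measurable F) (hvar : ∀ t, ∫ ω, F (t, ω) ^ 2 ∂P = 1) : Integrable F (μ.prod P) := by
  have hsq : Integrable (fun q => F q ^ 2) (μ.prod P) :=
    integrable_prod_of_integral_norm_le (C := 1) (hF.pow_const 2).aestronglyMeasurable
      (fun t => (memLp_two_of_integral_sq_eq_one hF hvar t).integrable_sq)
      fun t => by simp only [norm_pow, Real.norm_eq_abs, sq_abs, hvar t, le_refl]
  exact ((memLp_two_iff_integrable_sq hF.aestronglyMeasurable).2 hsq).integrable one_le_two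

lemma integral_integral_mul_integral [SFinite μ₁] [SFinite μ₂] [SFinite P]
    (hΦ : Integrable (fun q : (T × T) × Ω => F (q.1.1, q.2) * F (q.1.2, q.2))
      ((μ₁.prod μ₂).prod P)) :
    Integrable (fun ω => (∫ t, F (t, ω) ∂μ₁) * ∫ s, F (s, ω) ∂μ₂) P ∧
      ∫ ω, (∫ t, F (t, ω) ∂μ₁) * (∫ s, F (s, ω) ∂μ₂) ∂P
        = ∫ p, ∫ ω, F (p.1, ω) * F (p.2, ω) ∂P ∂(μ₁.prod μ₂) := by
  simp_rw [← integral_prod_mul (μ := μ₁) (ν := μ₂)]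
  exact ⟨hΦ.integral_prod_right, (integral_prod_symm _ hΦ).symm.trans (integral_prod _ hΦ)⟩

variable [MeasurableEq T] {ρ : ℝ}

lemma integral_setIntegral_mul_setIntegral [IsFiniteMeasure μ] [NullSingletonClass μ]
    [IsFiniteMeasure P] (hF : Measurable F) (hvar : ∀ t, ∫ ω, F (t, ω) ^ 2 ∂P = 1)
    (hcov : ∀ t s, t ≠ s → ∫ ω, F (t, ω) * F (s, ω) ∂P = ρ) (A B : Set T) :
    Integrable (fun ω => (∫ t in A, F (t, ω) ∂μ) * ∫ s in B, F (s, ω) ∂μ) P ∧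
      ∫ ω, (∫ t in A, F (t, ω) ∂μ) * (∫ s in B, F (s, ω) ∂μ) ∂P = ρ * μ.real A * μ.real B := by
  obtain ⟨hint, heq⟩ := integral_integral_mul_integral
    (integrable_mul_of_integral_sq_eq_one (μ₁ := μ.restrict A) (μ₂ := μ.restrict B) hF hvar)
  refine ⟨hint, heq.trans ?_⟩
  rw [integral_congr_ae (ae_prod_fst_ne_snd.mono fun p hp => hcov p.1 p.2 hp),
    integral_const, smul_eq_mul, measureReal_def, ← Set.univ_prod_univ, Measure.prod_prod,
    ENNReal.toReal_mul, Measure.restrict_apply_univ, Measure.restrict_apply_univ, measureReal_def,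
    measureReal_def]
  ring

lemma setIntegral_ae_eq_measureReal_mul_integral [IsProbabilityMeasure μ] [NullSingletonClass μ]
    [IsFiniteMeasure P] (hF : Measurable F) (hvar : ∀ t, ∫ ω, F (t, ω) ^ 2 ∂P = 1)
    (hcov : ∀ t s, t ≠ s → ∫ ω, F (t, ω) * F (s, ω) ∂P = ρ) (A : Set T) :
    (fun ω => ∫ t in A, F (t, ω) ∂μ) =ᵐ[P] fun ω => μ.real A * ∫ t, F (t, ω) ∂μ := by
  have hcovY := integral_setIntegral_mul_setIntegral (μ := μ) hF hvar hcov
  obtain ⟨hAA, hAA'⟩ := hcovY A A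
  obtain ⟨hAU, hAU'⟩ := hcovY A Set.univ
  obtain ⟨hUU, hUU'⟩ := hcovY Set.univ Set.univ
  simp only [Measure.restrict_univ, probReal_univ, mul_one] at hAU hAU' hUU hUU'
  exact ae_eq_const_mul_of_integral_mul_eq hAA hAU hUU (by rw [hAA', hAU']; ring)
    (by rw [hAU', hUU']; ring)

lemma ae_eq_integral_of_constant_correlation [IsProbabilityMeasure μ] [NullSingletonClass μ]
    [IsFiniteMeasure P] (hF : Measurable F) (hvar : ∀ t, ∫ ω, F (t, ω) ^ 2 ∂P = 1)
    (hcov : ∀ t s, t ≠ s → ∫ ω, F (t, ω) * F (s, ω) ∂P = ρ) :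
    F =ᵐ[μ.prod P] fun q => ∫ t, F (t, q.2) ∂μ := by
  have hFint : Integrable F (μ.prod P) := integrable_of_integral_sq_eq_one hF hvar
  have hH : Integrable (fun q => F q - ∫ t, F (t, q.2) ∂μ) (μ.prod P) :=
    hFint.sub (hFint.integral_prod_right.comp_snd μ)
  have hrect : ∀ ⦃A : Set T⦄, MeasurableSet A → ∀ ⦃B : Set Ω⦄, MeasurableSet B →
      ∫ q in A ×ˢ B, F q - ∫ t, F (t, q.2) ∂μ ∂(μ.prod P) = 0 := by
    intro A _ B _
    rw [← Measure.prod_restrict, integral_prod_symm _ (hH.mono_measure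
      (Measure.prod_mono Measure.restrict_le_self Measure.restrict_le_self))]
    refine integral_eq_zero_of_ae ?_
    have hY := setIntegral_ae_eq_measureReal_mul_integral (μ := μ) hF hvar hcov A
    filter_upwards [ae_restrict_of_ae hY, ae_restrict_of_ae hFint.prod_left_ae] with ω hA hslice
    rw [integral_sub hslice.integrableOn (integrable_const _), hA, setIntegral_const, smul_eq_mul,
      sub_self, Pi.zero_apply]
  filter_upwards [ae_eq_zero_of_forall_setIntegral_prod_eq_zero hH hrect] with q hq
  exact sub_eq_zero.1 hq

theorem eq_one_of_constant_correlation (μ : Measure T) [IsProbabilityMeasure μ]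
    [NullSingletonClass μ] [IsFiniteMeasure P] (hF : Measurable F)
    (hvar : ∀ t, ∫ ω, F (t, ω) ^ 2 ∂P = 1)
    (hcov : ∀ t s, t ≠ s → ∫ ω, F (t, ω) * F (s, ω) ∂P = ρ) : ρ = 1 := by
  obtain ⟨t, s, hts, ht, hs⟩ := exists_ne_of_ae (μ := μ)
    (Measure.ae_ae_of_ae_prod (ae_eq_integral_of_constant_correlation hF hvar hcov))
  calc ρ = ∫ ω, F (t, ω) * F (s, ω) ∂P := (hcov t s hts).symm
    _ = ∫ ω, F (t, ω) ^ 2 ∂P := integral_congr_ae (by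
        filter_upwards [ht, hs] with ω h1 h2
        rw [h1, h2, sq])
    _ = 1 := hvar t

end Correlation

theorem nfl_normalized_process_correlation_one_general
    {Ω : Type*} [MeasurableSpace Ω] (P : Measure Ω) [IsProbabilityMeasure P]
    (f : ℝ → Ω → ℝ)
    (hmeas : Measurable fun p : Set.Icc (0 : ℝ) 1 × Ω => f p.1 p.2)
    (hvar : ∀ t ∈ Set.Icc (0 : ℝ) 1, ∫ ω, (f t ω) ^ 2 ∂P = 1)
    (ρ : ℝ)
    (hcov : ∀ t ∈ Set.Icc (0 : ℝ) 1, ∀ s ∈ Set.Icc (0 : ℝ) 1, t ≠ s →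
      ∫ ω, f t ω * f s ω ∂P = ρ) :
    ρ = 1 :=
  eq_one_of_constant_correlation (volume : Measure (Set.Icc (0 : ℝ) 1)) hmeas
    (fun t => hvar t t.2) fun t s hts => hcov t t.2 s s.2 (Subtype.coe_ne_coe.2 hts)

theorem nfl_normalized_process_correlation_one
    {Ω : Type*} [MeasurableSpace Ω] (P : Measure Ω) [IsProbabilityMeasure P]
    (f : ℝ → Ω → ℝ)
    (hmeas : Measurable fun p : Set.Icc (0 : ℝ) 1 × Ω => f p.1 p.2)
    (hmean : ∀ t ∈ Set.Icc (0 : ℝ) 1, ∫ ω, f t ω ∂P = 0)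
    (hvar : ∀ t ∈ Set.Icc (0 : ℝ) 1, ∫ ω, (f t ω) ^ 2 ∂P = 1)
    (ρ : ℝ)
    (hcov : ∀ t ∈ Set.Icc (0 : ℝ) 1, ∀ s ∈ Set.Icc (0 : ℝ) 1, t ≠ s →
      ∫ ω, f t ω * f s ω ∂P = ρ) :
    ρ = 1 :=
  nfl_normalized_process_correlation_one_general P f hmeas hvar ρ hcov
end

section
/- Let f : Ω × ℝ → ℝ be a measurable stochastic process indexed by the whole real line such that E[f(s)] = 0 and E[f(s)²] = 1 for all s ∈ ℝ, and suppose there exists ρ ∈ ℝ such that E[f(s)f(s')] = ρ for all s ≠ s'. Then for every t ≠ 0, E[ ∫_ℝ ( e^{−s²} f(s) − e^{−(s+t)²} f(s+t) )² ds ] = √(2π) · (1 − e^{−t²/2} ρ). -/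
/-!
The integrand is nonnegative and its pointwise expectation is an integrable function of `s`,
so Fubini lets us take the expectation inside. Since `E[f(s)²] = 1` and `E[f(s) f(s + t)] = ρ`
(as `s ≠ s + t`), that expectation is `e^{-2s²} - 2ρ e^{-s²} e^{-(s+t)²} + e^{-2(s+t)²}`.
Completing the square, `e^{-s²} e^{-(s+t)²} = e^{-t²/2} e^{-2(s+t/2)²}`, so each term integrates
to a translated Gaussian integral `√(π/2)`, giving `2√(π/2) (1 - e^{-t²/2} ρ)`.
-/

open MeasureTheory Real Function

section SecondMoment

variable {α : Type*} [MeasurableSpace α] {μ : Measure α}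

lemma memLp_two_of_integral_sq_ne_zero {X : α → ℝ} (hX : AEStronglyMeasurable X μ)
    (h : ∫ x, X x ^ 2 ∂μ ≠ 0) : MemLp X 2 μ :=
  (memLp_two_iff_integrable_sq hX).2 (.of_integral_ne_zero h)

lemma integral_mul_sub_mul_sq {X Y : α → ℝ} (hX : MemLp X 2 μ) (hY : MemLp Y 2 μ) (a b : ℝ) :
    ∫ x, (a * X x - b * Y x) ^ 2 ∂μ
      = a ^ 2 * ∫ x, X x ^ 2 ∂μ - 2 * a * b * ∫ x, X x * Y x ∂μ
        + b ^ 2 * ∫ x, Y x ^ 2 ∂μ := by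
  have hX2 := hX.integrable_sq.const_mul (a ^ 2)
  have hXY : Integrable (fun x => 2 * a * b * (X x * Y x)) μ :=
    (hX.integrable_mul hY).const_mul (2 * a * b)
  have hY2 := hY.integrable_sq.const_mul (b ^ 2)
  have hdiff : Integrable (fun x => a ^ 2 * X x ^ 2 - 2 * a * b * (X x * Y x)) μ := hX2.sub hXY
  have expand : ∀ x, (a * X x - b * Y x) ^ 2
      = a ^ 2 * X x ^ 2 - 2 * a * b * (X x * Y x) + b ^ 2 * Y x ^ 2 := fun x => by ring
  simp_rw [expand]
  rw [integral_add hdiff hY2, integral_sub hX2 hXY, integral_const_mul,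
    integral_const_mul, integral_const_mul]

end SecondMoment

lemma integral_integral_swap_of_nonneg {α β : Type*} [MeasurableSpace α] [MeasurableSpace β]
    {μ : Measure α} {ν : Measure β} [SFinite μ] [SFinite ν] {g : α → β → ℝ}
    (hg : AEStronglyMeasurable (uncurry g) (μ.prod ν)) (hg_nonneg : ∀ a b, 0 ≤ g a b)
    (hg_int : ∀ᵐ a ∂μ, Integrable (g a) ν) (hg_int' : Integrable (fun a => ∫ b, g a b ∂ν) μ) :
    ∫ b, ∫ a, g a b ∂μ ∂ν = ∫ a, ∫ b, g a b ∂ν ∂μ := by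
  refine (integral_integral_swap ((integrable_prod_iff hg).2 ⟨hg_int, hg_int'.congr ?_⟩)).symm
  filter_upwards with a
  simp only [uncurry_apply_pair, norm_of_nonneg (hg_nonneg _ _)]

section Gaussian

lemma exp_neg_sq_mul_exp_neg_add_sq (s t : ℝ) :
    exp (-s ^ 2) * exp (-(s + t) ^ 2) = exp (-t ^ 2 / 2) * exp (-2 * (s + t / 2) ^ 2) := by
  rw [← exp_add, ← exp_add]; ring_nf

lemma integrable_exp_neg_sq_mul_exp_neg_add_sq (t : ℝ) :
    Integrable fun s : ℝ => exp (-s ^ 2) * exp (-(s + t) ^ 2) := by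
  simp_rw [exp_neg_sq_mul_exp_neg_add_sq]
  exact ((integrable_exp_neg_mul_sq two_pos).comp_add_right (t / 2)).const_mul _

lemma integral_exp_neg_sq_mul_exp_neg_add_sq (t : ℝ) :
    ∫ s : ℝ, exp (-s ^ 2) * exp (-(s + t) ^ 2) = exp (-t ^ 2 / 2) * √(π / 2) := by
  simp_rw [exp_neg_sq_mul_exp_neg_add_sq]
  rw [integral_const_mul, integral_add_right_eq_self (fun s => exp (-2 * s ^ 2)),
    integral_gaussian]

lemma integrable_exp_neg_sq_sq : Integrable fun s : ℝ => exp (-s ^ 2) ^ 2 := by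
  simpa [sq] using integrable_exp_neg_sq_mul_exp_neg_add_sq 0

lemma integral_exp_neg_sq_sq : ∫ s : ℝ, exp (-s ^ 2) ^ 2 = √(π / 2) := by
  simpa [sq] using integral_exp_neg_sq_mul_exp_neg_add_sq 0

lemma integrable_exp_neg_sq_sq_sub_mul_add_sq (ρ t : ℝ) :
    Integrable fun s : ℝ => exp (-s ^ 2) ^ 2 - 2 * ρ * (exp (-s ^ 2) * exp (-(s + t) ^ 2))
      + exp (-(s + t) ^ 2) ^ 2 :=
  (integrable_exp_neg_sq_sq.sub ((integrable_exp_neg_sq_mul_exp_neg_add_sq t).const_mul _)).add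
    (integrable_exp_neg_sq_sq.comp_add_right t)

lemma integral_exp_neg_sq_sq_sub_mul_add_sq (ρ t : ℝ) :
    ∫ s : ℝ, (exp (-s ^ 2) ^ 2 - 2 * ρ * (exp (-s ^ 2) * exp (-(s + t) ^ 2))
      + exp (-(s + t) ^ 2) ^ 2) = √(2 * π) * (1 - exp (-t ^ 2 / 2) * ρ) := by
  have hcross := (integrable_exp_neg_sq_mul_exp_neg_add_sq t).const_mul (2 * ρ)
  have hdiff : Integrable fun s : ℝ =>
      exp (-s ^ 2) ^ 2 - 2 * ρ * (exp (-s ^ 2) * exp (-(s + t) ^ 2)) :=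
    integrable_exp_neg_sq_sq.sub hcross
  rw [integral_add hdiff (integrable_exp_neg_sq_sq.comp_add_right t),
    integral_sub integrable_exp_neg_sq_sq hcross, integral_const_mul,
    integral_add_right_eq_self (fun s => exp (-s ^ 2) ^ 2), integral_exp_neg_sq_sq,
    integral_exp_neg_sq_mul_exp_neg_add_sq, show 2 * π = 2 ^ 2 * (π / 2) by ring,
    sqrt_mul (by positivity), sqrt_sq zero_le_two]
  ring

end Gaussian

theorem gaussian_weighted_translate_second_moment_general
    {Ω : Type*} [MeasurableSpace Ω] (P : Measure Ω) [IsProbabilityMeasure P]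
    (f : ℝ → Ω → ℝ)
    (hmeas : Measurable fun p : ℝ × Ω => f p.1 p.2)
    (hvar : ∀ s : ℝ, ∫ ω, (f s ω) ^ 2 ∂P = 1)
    (ρ : ℝ)
    (hcov : ∀ s s' : ℝ, s ≠ s' → ∫ ω, f s ω * f s' ω ∂P = ρ) :
    ∀ t : ℝ, t ≠ 0 →
      ∫ ω, (∫ s : ℝ,
          (Real.exp (-s ^ 2) * f s ω - Real.exp (-(s + t) ^ 2) * f (s + t) ω) ^ 2) ∂P
        = Real.sqrt (2 * Real.pi) * (1 - Real.exp (-t ^ 2 / 2) * ρ) := by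
  intro t ht
  have hf : ∀ s, MemLp (f s) 2 P := fun s =>
    memLp_two_of_integral_sq_ne_zero (hmeas.of_uncurry_left).aestronglyMeasurable (by simp [hvar])
  have hinner : ∀ s : ℝ,
      ∫ ω, (exp (-s ^ 2) * f s ω - exp (-(s + t) ^ 2) * f (s + t) ω) ^ 2 ∂P
        = exp (-s ^ 2) ^ 2 - 2 * ρ * (exp (-s ^ 2) * exp (-(s + t) ^ 2))
          + exp (-(s + t) ^ 2) ^ 2 := fun s => by
    rw [integral_mul_sub_mul_sq (hf s) (hf (s + t)), hvar, hvar,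
      hcov s (s + t) (by simpa [eq_comm] using ht)]
    ring
  have hswap := integral_integral_swap_of_nonneg (μ := volume) (ν := P)
    (g := fun s ω => (exp (-s ^ 2) * f s ω - exp (-(s + t) ^ 2) * f (s + t) ω) ^ 2)
    (by fun_prop) (fun _ _ => sq_nonneg _)
    (ae_of_all _ fun s => (((hf s).const_mul _).sub ((hf (s + t)).const_mul _)).integrable_sq)
    ((integrable_exp_neg_sq_sq_sub_mul_add_sq ρ t).congr
      (ae_of_all _ fun s => (hinner s).symm))
  rw [hswap, integral_congr_ae (ae_of_all _ hinner), integral_exp_neg_sq_sq_sub_mul_add_sq]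

theorem gaussian_weighted_translate_second_moment
    {Ω : Type*} [MeasurableSpace Ω] (P : Measure Ω) [IsProbabilityMeasure P]
    (f : ℝ → Ω → ℝ)
    (hmeas : Measurable fun p : ℝ × Ω => f p.1 p.2)
    (hmean : ∀ s : ℝ, ∫ ω, f s ω ∂P = 0)
    (hvar : ∀ s : ℝ, ∫ ω, (f s ω) ^ 2 ∂P = 1)
    (ρ : ℝ)
    (hcov : ∀ s s' : ℝ, s ≠ s' → ∫ ω, f s ω * f s' ω ∂P = ρ) :
    ∀ t : ℝ, t ≠ 0 →
      ∫ ω, (∫ s : ℝ,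
          (Real.exp (-s ^ 2) * f s ω - Real.exp (-(s + t) ^ 2) * f (s + t) ω) ^ 2) ∂P
        = Real.sqrt (2 * Real.pi) * (1 - Real.exp (-t ^ 2 / 2) * ρ) :=
  gaussian_weighted_translate_second_moment_general P f hmeas hvar ρ hcov
end

section
/- Let f be a measurable stochastic process on [0,1] whose random variables f(t), t ∈ [0,1], are mutually independent and identically distributed. Then there exists a constant k ∈ ℝ such that P{ω : f(t,ω) = k} = 1 for every t ∈ [0,1]. -/
/-!
Fix a Borel set `B`, put `A t = {f t ∈ B}` and `q = P (A t)`. The occupation measure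
`X ω = λ {t | ω ∈ A t}` has mean `q` and, by Tonelli and pairwise independence off the
Lebesgue-null diagonal, second moment `q²`, so `X = q` almost surely. Doing this for the
restrictions of `λ` to the sets of a countable generating π-system yields one `ω` for which
`λ` restricted to `S = {t | ω ∈ A t}` equals `q • λ`; evaluating both on `S` gives `q = q²`.
Hence the common law of the `f t` is a zero-one measure on `ℝ`, that is, a Dirac mass.
-/

open MeasureTheory ProbabilityTheory
open scoped ENNReal

theorem MeasurableSpace.exists_countable_isPiSystem_generateFrom (T : Type*)
    [m : MeasurableSpace T] [CountablyGenerated T] :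
    ∃ C : Set (Set T), C.Countable ∧ IsPiSystem C ∧ m = generateFrom C := by
  set S := countableGeneratingSet T
  have hsub : generatePiSystem S ⊆ Set.sInter '' {F | F.Finite ∧ F ⊆ S} := by
    intro s hs
    induction hs with
    | base hs =>
      exact ⟨{_}, ⟨Set.finite_singleton _, Set.singleton_subset_iff.2 hs⟩, Set.sInter_singleton _⟩
    | inter _ _ _ ihs iht =>
      obtain ⟨F, ⟨hF, hFS⟩, rfl⟩ := ihs
      obtain ⟨G, ⟨hG, hGS⟩, rfl⟩ := iht
      exact ⟨F ∪ G, ⟨hF.union hG, Set.union_subset hFS hGS⟩, Set.sInter_union F G⟩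
  refine ⟨generatePiSystem S, ?_, isPiSystem_generatePiSystem S, ?_⟩
  · exact ((Set.countable_ofPred_finite_subset countable_countableGeneratingSet).image _).mono hsub
  · rw [generateFrom_generatePiSystem_eq, generateFrom_countableGeneratingSet]

section

variable {T Ω : Type*} [MeasurableSpace T] [MeasurableSpace Ω]

theorem MeasureTheory.lintegral_measure_setOf_mem_eq (ν : Measure T) (P : Measure Ω)
    [SFinite ν] [SFinite P] {A : T → Set Ω} (hA : MeasurableSet {p : T × Ω | p.2 ∈ A p.1}) :
    ∫⁻ ω, ν {t | ω ∈ A t} ∂P = ∫⁻ t, P (A t) ∂ν :=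
  (Measure.prod_apply_symm hA).symm.trans (Measure.prod_apply hA)

theorem ProbabilityTheory.ae_eq_of_lintegral_eq_of_lintegral_sq_eq {P : Measure Ω}
    [IsProbabilityMeasure P] {X : Ω → ℝ≥0∞} (hX : AEMeasurable X P) {c : ℝ≥0∞} (hc : c ≠ ∞)
    (h1 : ∫⁻ ω, X ω ∂P = c) (h2 : ∫⁻ ω, X ω ^ 2 ∂P = c ^ 2) :
    ∀ᵐ ω ∂P, X ω = c := by
  have hfin : ∀ᵐ ω ∂P, X ω < ∞ := ae_lt_top' hX (h1 ▸ hc)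
  set Y : Ω → ℝ := fun ω => (X ω).toReal
  have hY : AEMeasurable Y P := hX.ennreal_toReal
  have hmean : P[Y] = c.toReal := by rw [integral_toReal hX hfin, h1]
  have hsq : ∫⁻ ω, ‖Y ω‖ₑ ^ 2 ∂P = c ^ 2 := by
    rw [← h2]
    refine lintegral_congr_ae ?_
    filter_upwards [hfin] with ω hω
    simp [Y, hω.ne]
  have hvar : evariance Y P = 0 := by
    rw [evariance_def' hY.aestronglyMeasurable, hmean, hsq, ← ENNReal.toReal_pow,
      ENNReal.ofReal_toReal (ENNReal.pow_ne_top hc), tsub_self]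
  filter_upwards [(evariance_eq_zero_iff hY).1 hvar, hfin] with ω hω hω'
  rw [hmean] at hω
  rw [← ENNReal.ofReal_toReal hω'.ne, ← ENNReal.ofReal_toReal hc]
  exact congrArg ENNReal.ofReal hω

theorem ProbabilityTheory.ae_measure_setOf_mem_eq_mul {P : Measure Ω} [IsProbabilityMeasure P]
    (ν : Measure T) [IsFiniteMeasure ν] [NullSingletonClass ν] {A : T → Set Ω}
    (hA : MeasurableSet {p : T × Ω | p.2 ∈ A p.1}) {q : ℝ≥0∞} (hq : ∀ t, P (A t) = q)
    (hindep : Pairwise fun s t => IndepSet (A s) (A t) P) :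
    ∀ᵐ ω ∂P, ν {t | ω ∈ A t} = q * ν Set.univ := by
  have hc : q * ν Set.univ ≠ ∞ := by
    rcases isEmpty_or_nonempty T with hT | ⟨⟨t⟩⟩
    · simp [Set.univ_eq_empty_iff.2 hT]
    · exact ENNReal.mul_ne_top (hq t ▸ measure_ne_top P _) (measure_ne_top ν _)
  have hA₂ : MeasurableSet {p : (T × T) × Ω | p.2 ∈ A p.1.1 ∩ A p.1.2} :=
    ((measurable_fst.comp measurable_fst).prodMk measurable_snd hA).inter
      ((measurable_snd.comp measurable_fst).prodMk measurable_snd hA)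
  have hpair : ∀ s, ∫⁻ t, P (A s ∩ A t) ∂ν = q ^ 2 * ν Set.univ := fun s => by
    rw [← lintegral_const]
    refine lintegral_congr_ae ?_
    filter_upwards [ν.ae_ne s] with t hts
    rw [(hindep hts.symm).measure_inter_eq_mul, hq, hq, sq]
  refine ae_eq_of_lintegral_eq_of_lintegral_sq_eq (X := fun ω => ν {t | ω ∈ A t})
    (measurable_measure_prodMk_right hA).aemeasurable hc ?_ ?_
  · rw [lintegral_measure_setOf_mem_eq ν P hA, lintegral_congr hq, lintegral_const]
  · have hsq : ∀ ω, ν {t | ω ∈ A t} ^ 2 = ν.prod ν {p | ω ∈ A p.1 ∩ A p.2} := fun ω => by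
      rw [sq, ← Measure.prod_prod]
      rfl
    simp_rw [hsq]
    rw [lintegral_measure_setOf_mem_eq (ν.prod ν) P hA₂,
      lintegral_prod (fun p : T × T => P (A p.1 ∩ A p.2))
        (measurable_measure_prodMk_left hA₂).aemeasurable]
    simp_rw [hpair]
    rw [lintegral_const]
    ring

theorem ProbabilityTheory.eq_zero_or_one_of_pairwise_indepSet
    [MeasurableSpace.CountablyGenerated T] {P : Measure Ω} [IsProbabilityMeasure P]
    (ν : Measure T) [IsFiniteMeasure ν] [NullSingletonClass ν] [NeZero ν] {A : T → Set Ω}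
    (hA : MeasurableSet {p : T × Ω | p.2 ∈ A p.1}) {q : ℝ≥0∞} (hq : ∀ t, P (A t) = q)
    (hindep : Pairwise fun s t => IndepSet (A s) (A t) P) :
    q = 0 ∨ q = 1 := by
  obtain ⟨C, hCc, hCpi, hgen⟩ := MeasurableSpace.exists_countable_isPiSystem_generateFrom T
  set S : Ω → Set T := fun ω => {t | ω ∈ A t}
  have hS : ∀ ω, MeasurableSet (S ω) := fun ω => measurable_prodMk_right hA
  have hae : ∀ᵐ ω ∂P, ∀ I ∈ insert Set.univ C, ν (S ω ∩ I) = q * ν I := by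
    rw [ae_ball_iff (hCc.insert _)]
    intro I _
    filter_upwards [ae_measure_setOf_mem_eq_mul (ν.restrict I) hA hq hindep] with ω hω
    rwa [Measure.restrict_apply (hS ω), Measure.restrict_apply_univ] at hω
  obtain ⟨ω, hω⟩ := hae.exists
  have hext : ν.restrict (S ω) = q • ν := by
    refine ext_of_generate_finite C hgen hCpi (fun I hI => ?_) ?_
    · rw [Measure.restrict_apply' (hS ω), Set.inter_comm, hω I (Set.mem_insert_of_mem _ hI)]
      rfl
    · rw [Measure.restrict_apply_univ, ← Set.inter_univ (S ω), hω _ (Set.mem_insert _ _)]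
      rfl
  have hν : ν Set.univ ≠ 0 := Measure.measure_univ_ne_zero.2 (NeZero.ne ν)
  obtain ⟨t⟩ : Nonempty T := (nonempty_of_measure_ne_zero hν).to_subtype.map Subtype.val
  have hSω : ν (S ω) = q * ν Set.univ := by
    simpa using hω _ (Set.mem_insert _ _)
  have hfix : q * (q * ν Set.univ) = q * ν Set.univ := by
    rw [← hSω, ← smul_eq_mul, ← Measure.smul_apply, ← hext, Measure.restrict_apply_self]
  rcases eq_or_ne q 0 with h0 | h0
  · exact Or.inl h0
  · refine Or.inr ((ENNReal.mul_eq_left ?_ ?_).1 (by rwa [mul_comm] at hfix))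
    · exact mul_ne_zero h0 hν
    · exact ENNReal.mul_ne_top (hq t ▸ measure_ne_top P _) (measure_ne_top ν _)

end

theorem measurable_iid_process_degenerate
    {Ω : Type*} [MeasurableSpace Ω] (P : Measure Ω) [IsProbabilityMeasure P]
    (f : ℝ → Ω → ℝ)
    (hmeas : Measurable fun p : Set.Icc (0 : ℝ) 1 × Ω => f p.1 p.2)
    (hindep : iIndepFun
      (fun t : Set.Icc (0 : ℝ) 1 => f t) P)
    (hid : ∀ t ∈ Set.Icc (0 : ℝ) 1, ∀ s ∈ Set.Icc (0 : ℝ) 1,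
      P.map (f t) = P.map (f s)) :
    ∃ k : ℝ, ∀ t ∈ Set.Icc (0 : ℝ) 1, P {ω | f t ω = k} = 1 := by
  have hf : ∀ t : Set.Icc (0 : ℝ) 1, Measurable (f t) := fun t =>
    hmeas.comp measurable_prodMk_left
  set μ := P.map (f 0)
  have hμ : ∀ t : Set.Icc (0 : ℝ) 1, P.map (f t) = μ := fun t =>
    hid t t.2 0 ⟨le_rfl, zero_le_one⟩
  have : IsProbabilityMeasure μ := Measure.isProbabilityMeasure_map (hf 0).aemeasurable
  have : IsZeroOneMeasure μ := ⟨fun B hB =>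
    eq_zero_or_one_of_pairwise_indepSet (volume : Measure unitInterval)
      (A := fun t => f t ⁻¹' B) (hmeas hB)
      (fun t => by rw [← Measure.map_apply (hf t) hB, hμ t])
      (fun s t hst =>
        (indepFun_iff_indepSet_preimage (hf s) (hf t)).1 (hindep.indepFun hst) B B hB hB)⟩
  obtain ⟨k, hk⟩ := IsZeroOneMeasure.exists_eq_dirac (μ := μ)
  refine ⟨k, fun t ht => ?_⟩
  change P (f t ⁻¹' {k}) = 1
  rw [← Measure.map_apply (hf ⟨t, ht⟩) (measurableSet_singleton k), hμ, hk,
    Measure.dirac_apply_of_mem (Set.mem_singleton k)]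
end
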